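/- arXiv:1609.07471 — 5 statements merged into one kernel-verified Lean document; each statement's English description precedes it below -/
import Mathlib

section
/- Let $G$ be a finite tree with at least two edges such that no two leaf edges share a common vertex (i.e., no vertex is adjacent to two leaves via leaf edges). Then there exists a vertex of degree two in $G$ which is adjacent to a leaf. -/
open SimpleGraph Finset

/-
If no vertex of degree two is adjacent to a leaf, then the neighbour of every leaf has degree at
least three (it cannot be a leaf once the tree has three vertices), and by hypothesis distinct
leaves have distinct neighbours. Charging each leaf's deficit `2 - 1` to the surplus `deg - 2 ≥ 1`
of its neighbour gives `∑ deg ≥ 2 |V|`, contradicting `∑ deg = 2 |E| = 2 |V| - 2` in a tree.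
-/

lemma two_mul_card_le_sum_of_injOn {V : Type*} [Fintype V] (d : V → ℕ) (hpos : ∀ v, 0 < d v)
    (f : V → V) (hf : Set.InjOn f {w | d w = 1}) (hf3 : ∀ w, d w = 1 → 3 ≤ d (f w)) :
    2 * Fintype.card V ≤ ∑ v, d v := by
  classical
  set L := univ.filter (d · = 1)
  set S := L.image f
  have hSL : #S = #L := card_image_of_injOn (by simpa [L] using hf)
  have hpoint : ∀ v, 2 + (if v ∈ S then 1 else 0) ≤ d v + (if v ∈ L then 1 else 0) := by
    intro v
    have hS : v ∈ S → 3 ≤ d v := by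
      simp only [S, L, mem_image, mem_filter, mem_univ, true_and]
      rintro ⟨w, hw, rfl⟩
      exact hf3 w hw
    by_cases hv : d v = 1
    · have hvS : v ∉ S := fun h => by have := hS h; omega
      have hvL : v ∈ L := by simp [L, hv]
      simp only [if_neg hvS, if_pos hvL, hv, le_refl]
    · have hvL : v ∉ L := by simp [L, hv]
      have := hpos v
      rw [if_neg hvL]
      split_ifs with h
      · have := hS h; omega
      · omega
  have hsum := sum_le_sum fun v (_ : v ∈ univ) => hpoint v
  simp only [sum_add_distrib, sum_const, card_univ, smul_eq_mul, sum_boole, Nat.cast_id,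
    filter_mem_eq_inter, univ_inter] at hsum
  omega

lemma SimpleGraph.Walk.mem_of_adj_closed {V : Type*} {G : SimpleGraph V} {s : Set V}
    (hs : ∀ ⦃x y⦄, G.Adj x y → x ∈ s → y ∈ s) {u v : V} (p : G.Walk u v) (hu : u ∈ s) :
    v ∈ s := by
  induction p with
  | nil => exact hu
  | cons h _ ih => exact ih (hs h hu)

lemma SimpleGraph.Preconnected.card_le_two_of_adj_of_degree_eq_one {V : Type*} [Fintype V]
    {G : SimpleGraph V} [DecidableRel G.Adj] (hG : G.Preconnected) {v w : V} (hvw : G.Adj v w)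
    (hv : G.degree v = 1) (hw : G.degree w = 1) : Fintype.card V ≤ 2 := by
  classical
  obtain ⟨_, -, hv_uniq⟩ := degree_eq_one_iff_existsUnique_adj.mp hv
  obtain ⟨_, -, hw_uniq⟩ := degree_eq_one_iff_existsUnique_adj.mp hw
  have hclosed : ∀ ⦃x y⦄, G.Adj x y → x ∈ ({v, w} : Set V) → y ∈ ({v, w} : Set V) := by
    rintro x y hxy (rfl | rfl)
    · exact .inr ((hv_uniq y hxy).trans (hv_uniq w hvw).symm)
    · exact .inl ((hw_uniq y hxy).trans (hw_uniq v hvw.symm).symm)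
  have hall : ∀ u, u ∈ ({v, w} : Finset V) := fun u => by
    obtain ⟨p⟩ := hG v u
    simpa using p.mem_of_adj_closed hclosed (by simp)
  calc Fintype.card V = #(univ : Finset V) := rfl
    _ ≤ #({v, w} : Finset V) := card_le_card fun u _ => hall u
    _ ≤ 2 := card_le_two

theorem stmt_0_general {V : Type*} [Fintype V] (G : SimpleGraph V)
    [DecidableRel G.Adj] (htree : G.IsTree) (hedges : 2 ≤ G.edgeFinset.card)
    (hleaf : ∀ v w w' : V, G.Adj v w → G.Adj v w' →
      G.degree w = 1 → G.degree w' = 1 → w = w') :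
    ∃ v w : V, G.degree v = 2 ∧ G.Adj v w ∧ G.degree w = 1 := by
  by_contra! hc
  have hcard := htree.card_edgeFinset
  have : Nontrivial V := Fintype.one_lt_card_iff_nontrivial.mp (by omega)
  have hpos := htree.connected.preconnected.degree_pos_of_nontrivial
  choose f hf using fun w => (G.degree_pos_iff_exists_adj w).mp (hpos w)
  have hf3 : ∀ w, G.degree w = 1 → 3 ≤ G.degree (f w) := fun w hw => by
    have h1 : G.degree (f w) ≠ 1 := fun h1 => by
      have := htree.connected.preconnected.card_le_two_of_adj_of_degree_eq_one (hf w) hw h1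
      omega
    have h2 : G.degree (f w) ≠ 2 := fun h2 => hc (f w) w h2 (hf w).symm hw
    have := hpos (f w)
    omega
  have hinj : Set.InjOn f {w | G.degree w = 1} := fun w hw w' hw' hff =>
    hleaf (f w) w w' (hf w).symm (hff ▸ (hf w').symm) hw hw'
  have := two_mul_card_le_sum_of_injOn _ (fun v => hpos v) f hinj hf3
  rw [sum_degrees_eq_twice_card_edges] at this
  omega

theorem stmt_0 {V : Type*} [Fintype V] [DecidableEq V] (G : SimpleGraph V)
    [DecidableRel G.Adj] (htree : G.IsTree) (hedges : 2 ≤ G.edgeFinset.card)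
    (hleaf : ∀ v w w' : V, G.Adj v w → G.Adj v w' →
      G.degree w = 1 → G.degree w' = 1 → w = w') :
    ∃ v w : V, G.degree v = 2 ∧ G.Adj v w ∧ G.degree w = 1 :=
  stmt_0_general G htree hedges hleaf
end

section
/- Let $a, c > 0$ with $a + c = 10/9$, $a < 1$, and $c \le a$. Then $\sin(\pi c)\cos(\pi a) + 2\sin(\pi a)\cos(\pi c) < 0$. -/
/-!
Since `a + c = 10/9`, the sum formulas turn the left-hand side into
`(sin (π (a - c)) - 3 sin (π/9)) / 2`, and `sin (π/9) > 1/3` follows from the triple-angle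
formula: `3 s - 4 s³ = sin (π/3) = √3/2`, while `3 s - 4 s³ ≤ 23/27 < √3/2` for `0 ≤ s ≤ 1/3`.
-/

open Real

theorem sin_mul_cos_add_two_mul_sin_mul_cos (x y : ℝ) :
    sin y * cos x + 2 * sin x * cos y = (3 * sin (x + y) + sin (x - y)) / 2 := by
  rw [sin_add, sin_sub]
  ring

theorem one_third_lt_sin_pi_div_nine : 1 / 3 < sin (π / 9) := by
  set s := sin (π / 9)
  have hs_nonneg : 0 ≤ s := sin_nonneg_of_nonneg_of_le_pi (by positivity) (by linarith [pi_pos])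
  have h_triple : 3 * s - 4 * s ^ 3 = √3 / 2 := by
    rw [← sin_three_mul, ← sin_pi_div_three]
    ring_nf
  have h_sqrt_three : (46 : ℝ) / 27 < √3 := by
    rw [lt_sqrt (by norm_num)]
    norm_num
  by_contra! hs
  have h_cubic_le : 3 * s - 4 * s ^ 3 ≤ 23 / 27 := by
    nlinarith [mul_nonneg (sub_nonneg.2 hs) (mul_nonneg hs_nonneg hs_nonneg),
      mul_nonneg (sub_nonneg.2 hs) hs_nonneg]
  linarith

theorem stmt_3_general (a c : ℝ) (hsum : a + c = 10 / 9) :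
    sin (π * c) * cos (π * a) + 2 * sin (π * a) * cos (π * c) < 0 := by
  have h_sum : sin (π * a + π * c) = -sin (π / 9) := by
    rw [← mul_add, hsum, show π * (10 / 9) = π / 9 + π by ring, sin_add_pi]
  rw [sin_mul_cos_add_two_mul_sin_mul_cos, h_sum]
  linarith [sin_le_one (π * a - π * c), one_third_lt_sin_pi_div_nine]

theorem stmt_3 (a c : ℝ) (ha : 0 < a) (hc : 0 < c) (hsum : a + c = 10 / 9)
    (ha1 : a < 1) (hca : c ≤ a) :
    sin (π * c) * cos (π * a) + 2 * sin (π * a) * cos (π * c) < 0 :=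
  stmt_3_general a c hsum
end

section
/- Let $f : [0,L] \to \mathbb{R}$ be continuously differentiable with $f(0) = 0$. Then $\int_0^L f(t)^2\,dt \le \frac{4L^2}{\pi^2}\int_0^L f'(t)^2\,dt$. -/
open Real MeasureTheory intervalIntegral Set Filter Topology

/-! With `w t = c * cot (c * t)`, a solution of the Riccati equation `w' = -c² - w²`, one has
`f'² - c² f² = (w f²)' + (f' - w f)² ≥ (w f²)'`. Integrating over `[0, L]`, the boundary term
`w f²` vanishes at `0` because `f t = O(t)`, and is nonnegative at `L` as long as `c L ≤ π / 2`.
The constant `c = π / (2L)` is sharp, with equality for `f t = sin (c t)`. -/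

theorem hasDerivAt_mul_cot_mul {c t : ℝ} (hs : sin (c * t) ≠ 0) :
    HasDerivAt (fun x => c * cot (c * x)) (-c ^ 2 - (c * cot (c * t)) ^ 2) t := by
  have hlin : HasDerivAt (fun x => c * x) c t := by simpa using (hasDerivAt_id t).const_mul c
  simp only [cot_eq_cos_div_sin]
  refine ((hlin.cos.fun_div hlin.sin hs).const_mul c).congr_deriv ?_
  field_simp

theorem hasDerivAt_mul_cot_mul_sq {c t a : ℝ} {f : ℝ → ℝ} (hs : sin (c * t) ≠ 0)
    (hf : HasDerivAt f a t) :
    HasDerivAt (fun x => c * cot (c * x) * f x ^ 2)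
      (a ^ 2 - c ^ 2 * f t ^ 2 - (a - c * cot (c * t) * f t) ^ 2) t :=
  ((hasDerivAt_mul_cot_mul hs).fun_mul (hf.fun_pow 2)).congr_deriv (by push_cast; ring)

theorem mul_cot_le_pi_div_two {x : ℝ} (hx0 : 0 < x) (hx : x ≤ π / 2) : x * cot x ≤ π / 2 := by
  have hsin : 2 / π * x ≤ sin x := mul_le_sin hx0.le hx
  have hcos : cos x ≤ 1 := cos_le_one x
  have hpos : 0 < 2 / π * x := by positivity
  rw [cot_eq_cos_div_sin, mul_div_assoc']
  calc x * cos x / sin x ≤ x * 1 / (2 / π * x) := by gcongr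
    _ = π / 2 := by field_simp

theorem cot_nonneg_of_nonneg_of_le_pi_div_two {x : ℝ} (hx0 : 0 ≤ x) (hx : x ≤ π / 2) :
    0 ≤ cot x := by
  rw [cot_eq_cos_div_sin]
  exact div_nonneg (cos_nonneg_of_mem_Icc ⟨by linarith [pi_pos], hx⟩)
    (sin_nonneg_of_nonneg_of_le_pi hx0 (by linarith [pi_pos]))

theorem mul_cot_mul_sq_mem_Icc {c t y M : ℝ} (hc : 0 < c) (ht : 0 ≤ t) (hct : c * t ≤ π / 2)
    (hy : |y| ≤ M * t) : c * cot (c * t) * y ^ 2 ∈ Icc 0 (π / 2 * M ^ 2 * t) := by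
  obtain rfl | ht0 := ht.eq_or_lt
  · simp [cot_eq_cos_div_sin]
  have hcot : 0 ≤ cot (c * t) := cot_nonneg_of_nonneg_of_le_pi_div_two (by positivity) hct
  have hy2 : y ^ 2 ≤ (M * t) ^ 2 := sq_le_sq' (abs_le.1 hy).1 (abs_le.1 hy).2
  refine ⟨by positivity, ?_⟩
  calc c * cot (c * t) * y ^ 2 = (c * t) * cot (c * t) * (y ^ 2 / t) := by field_simp
    _ ≤ π / 2 * (M ^ 2 * t) := by
        gcongr
        · exact mul_cot_le_pi_div_two (by positivity) hct
        · rw [div_le_iff₀ ht0]; linarith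
    _ = π / 2 * M ^ 2 * t := by ring

theorem continuousOn_mul_cot_mul_sq {c L M : ℝ} {f : ℝ → ℝ} (hc : 0 < c) (hcL : c * L ≤ π / 2)
    (hf : ContinuousOn f (Icc 0 L)) (hfM : ∀ t ∈ Icc 0 L, |f t| ≤ M * t) :
    ContinuousOn (fun t => c * cot (c * t) * f t ^ 2) (Icc 0 L) := by
  intro t ht
  obtain rfl | ht0 := ht.1.eq_or_lt
  · have hbound : ∀ s ∈ Icc 0 L, ‖c * cot (c * s) * f s ^ 2‖ ≤ π / 2 * M ^ 2 * s := fun s hs => by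
      have := mul_cot_mul_sq_mem_Icc hc hs.1 (by nlinarith [hs.2]) (hfM s hs)
      rw [Real.norm_of_nonneg this.1]
      exact this.2
    have hlim : Tendsto (fun s => π / 2 * M ^ 2 * s) (𝓝[Icc 0 L] 0) (𝓝 0) := by
      have := (continuous_const_mul (π / 2 * M ^ 2)).continuousWithinAt (s := Icc 0 L) (x := 0)
      rwa [ContinuousWithinAt, mul_zero] at this
    rw [ContinuousWithinAt, show c * cot (c * 0) * f 0 ^ 2 = 0 by simp [cot_eq_cos_div_sin]]
    exact squeeze_zero_norm' (eventually_of_mem self_mem_nhdsWithin hbound) hlim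
  · have hs : sin (c * t) ≠ 0 :=
      (sin_pos_of_pos_of_lt_pi (by positivity) (by nlinarith [ht.2, pi_pos])).ne'
    simp only [cot_eq_cos_div_sin]
    exact (continuousWithinAt_const.mul
      ((continuous_cos.comp (continuous_const_mul c)).continuousWithinAt.div
        (continuous_sin.comp (continuous_const_mul c)).continuousWithinAt hs)).mul ((hf t ht).pow 2)

theorem sq_mul_integral_sq_le_integral_derivWithin_sq {c L : ℝ} {f : ℝ → ℝ} (hL : 0 < L)
    (hc : 0 < c) (hcL : c * L ≤ π / 2) (hf : ContDiffOn ℝ 1 f (Icc 0 L)) (h0 : f 0 = 0) :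
    c ^ 2 * ∫ t in (0:ℝ)..L, f t ^ 2 ≤ ∫ t in (0:ℝ)..L, derivWithin f (Icc 0 L) t ^ 2 := by
  set f' := derivWithin f (Icc 0 L)
  have hfc : ContinuousOn f (Icc 0 L) := hf.continuousOn
  have hf'c : ContinuousOn f' (Icc 0 L) := hf.continuousOn_derivWithin (uniqueDiffOn_Icc hL) le_rfl
  have hdiff : DifferentiableOn ℝ f (Icc 0 L) := hf.differentiableOn one_ne_zero
  obtain ⟨M, hM⟩ := isCompact_Icc.exists_bound_of_continuousOn hf'c
  have hfM : ∀ t ∈ Icc 0 L, |f t| ≤ M * t := fun t ht => by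
    simpa [h0, abs_of_nonneg ht.1] using
      (convex_Icc 0 L).norm_image_sub_le_of_norm_derivWithin_le hdiff hM (left_mem_Icc.2 hL.le) ht
  have hweight : ∀ t ∈ Ioo 0 L,
      HasDerivAt (fun x => c * cot (c * x) * f x ^ 2)
        (f' t ^ 2 - c ^ 2 * f t ^ 2 - (f' t - c * cot (c * t) * f t) ^ 2) t := fun t ht =>
    hasDerivAt_mul_cot_mul_sq
      (sin_pos_of_pos_of_lt_pi (mul_pos hc ht.1) (by nlinarith [ht.2, pi_pos])).ne'
      ((hdiff t (Ioo_subset_Icc_self ht)).hasDerivWithinAt.hasDerivAt (Icc_mem_nhds ht.1 ht.2))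
  have hFTC := sub_le_integral_of_hasDeriv_right_of_le
    (φ := fun t => f' t ^ 2 - c ^ 2 * f t ^ 2) hL.le
    (continuousOn_mul_cot_mul_sq hc hcL hfc hfM) (fun t ht => (hweight t ht).hasDerivWithinAt)
    ((hf'c.pow 2).sub (continuousOn_const.mul (hfc.pow 2))).integrableOn_Icc
    (fun t _ => sub_le_self _ (sq_nonneg _))
  have hboundary_L := (mul_cot_mul_sq_mem_Icc hc hL.le hcL (hfM L (right_mem_Icc.2 hL.le))).1
  rw [integral_sub (f := fun t => f' t ^ 2) (g := fun t => c ^ 2 * f t ^ 2)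
      ((hf'c.pow 2).intervalIntegrable_of_Icc hL.le)
      (((hfc.pow 2).intervalIntegrable_of_Icc hL.le).const_mul _),
    intervalIntegral.integral_const_mul] at hFTC
  simp only [mul_zero, h0, zero_pow two_ne_zero, sub_zero] at hFTC
  linarith

theorem stmt_8 (L : ℝ) (hL : 0 < L) (f : ℝ → ℝ)
    (hf : ContDiffOn ℝ 1 f (Icc 0 L)) (h0 : f 0 = 0) :
    ∫ t in (0:ℝ)..L, (f t) ^ 2 ≤
      (4 * L ^ 2 / π ^ 2) * ∫ t in (0:ℝ)..L, (derivWithin f (Icc 0 L) t) ^ 2 := by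
  have hc : 0 < π / (2 * L) := by positivity
  have hcL : π / (2 * L) * L = π / 2 := by field_simp
  have key := sq_mul_integral_sq_le_integral_derivWithin_sq hL hc hcL.le hf h0
  calc ∫ t in (0:ℝ)..L, f t ^ 2
      = 4 * L ^ 2 / π ^ 2 * ((π / (2 * L)) ^ 2 * ∫ t in (0:ℝ)..L, f t ^ 2) := by
        field_simp; norm_num
    _ ≤ 4 * L ^ 2 / π ^ 2 * ∫ t in (0:ℝ)..L, derivWithin f (Icc 0 L) t ^ 2 := by gcongr
end

section
/- Let $f : [0,L] \to \mathbb{R}$ be continuously differentiable with $f(0) = f(L) = 0$. Then $\int_0^L f(t)^2\,dt \le \frac{L^2}{\pi^2}\int_0^L f'(t)^2\,dt$. -/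
open Real MeasureTheory intervalIntegral Set Filter Topology

/-!
If `w` solves the Riccati equation `w' = -(q + w²)` on `(a, b)`, then
`f'² - q f² = (f' - f w)² + (f² w)'`; integrating, the boundary term vanishes because
`f a = f b = 0`, so `q ∫ f² ≤ ∫ f'²`. For `k (b - a) < π`, `w t = k cot (k t + θ)` is such a
solution with `q = k²`, and the phase `θ` can be chosen so that `k t + θ` stays in `(0, π)` on
all of `[a, b]`, keeping `w` continuous up to the endpoints. Letting `k ↑ π / (b - a)` gives the
sharp constant.
-/

theorem hasDerivAt_mul_cos_div_sin (k θ t : ℝ) (ht : sin (k * t + θ) ≠ 0) :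
    HasDerivAt (fun s => k * (cos (k * s + θ) / sin (k * s + θ)))
      (-(k ^ 2 + (k * (cos (k * t + θ) / sin (k * t + θ))) ^ 2)) t := by
  have hlin : HasDerivAt (fun s => k * s + θ) k t := by
    simpa using ((hasDerivAt_id t).const_mul k).add_const θ
  have hcos : HasDerivAt (fun s => cos (k * s + θ)) (-sin (k * t + θ) * k) t :=
    (hasDerivAt_cos _).comp t hlin
  have hsin : HasDerivAt (fun s => sin (k * s + θ)) (cos (k * t + θ) * k) t :=
    (hasDerivAt_sin _).comp t hlin
  refine ((hcos.div hsin ht).const_mul k).congr_deriv ?_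
  field_simp
  ring

section Picone

variable {a b q : ℝ} {f f' w : ℝ → ℝ}

theorem mul_integral_sq_le_integral_deriv_sq_of_riccati (hab : a ≤ b)
    (hf : ContinuousOn f (Icc a b)) (hf' : ContinuousOn f' (Icc a b))
    (hderiv : ∀ t ∈ Ioo a b, HasDerivAt f (f' t) t) (ha : f a = 0) (hb : f b = 0)
    (hw : ContinuousOn w (Icc a b)) (hw' : ∀ t ∈ Ioo a b, HasDerivAt w (-(q + w t ^ 2)) t) :
    q * ∫ t in a..b, f t ^ 2 ≤ ∫ t in a..b, f' t ^ 2 := by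
  set G : ℝ → ℝ := fun t => 2 * f t * f' t * w t - (q + w t ^ 2) * f t ^ 2
  have hint {g : ℝ → ℝ} (hg : ContinuousOn g (Icc a b)) : IntervalIntegrable g volume a b :=
    hg.intervalIntegrable_of_Icc hab
  have hG : ContinuousOn G (Icc a b) := by fun_prop
  have hFTC : ∫ t in a..b, G t = 0 := by
    have hF : ∀ t ∈ Ioo a b, HasDerivAt (fun s => f s ^ 2 * w s) (G t) t := fun t ht => by
      refine (((hderiv t ht).fun_pow 2).fun_mul (hw' t ht)).congr_deriv ?_
      push_cast
      ring
    rw [integral_eq_sub_of_hasDerivAt_of_le hab (by fun_prop) hF (hint hG)]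
    simp [ha, hb]
  have hsq : ∀ t, f' t ^ 2 - q * f t ^ 2 = (f' t - f t * w t) ^ 2 + G t := fun t => by
    ring
  have hnonneg : 0 ≤ ∫ t in a..b, (f' t - f t * w t) ^ 2 :=
    integral_nonneg hab fun t _ => sq_nonneg _
  have hsplit : ∫ t in a..b, (f' t ^ 2 - q * f t ^ 2)
      = (∫ t in a..b, (f' t - f t * w t) ^ 2) + ∫ t in a..b, G t := by
    simp_rw [hsq]
    exact integral_add (hint (by fun_prop)) (hint hG)
  rw [integral_sub (hint (by fun_prop)) (hint (by fun_prop)),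
    intervalIntegral.integral_const_mul] at hsplit
  linarith

end Picone

section Wirtinger

variable {a b : ℝ} {f f' : ℝ → ℝ}

theorem sq_mul_integral_sq_le_integral_deriv_sq {k : ℝ} (hab : a ≤ b)
    (hf : ContinuousOn f (Icc a b)) (hf' : ContinuousOn f' (Icc a b))
    (hderiv : ∀ t ∈ Ioo a b, HasDerivAt f (f' t) t) (ha : f a = 0) (hb : f b = 0)
    (hk : 0 ≤ k) (hkπ : k * (b - a) < π) :
    k ^ 2 * ∫ t in a..b, f t ^ 2 ≤ ∫ t in a..b, f' t ^ 2 := by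
  set θ := (π - k * (b - a)) / 2 - k * a with hθ
  have hsin : ∀ t ∈ Icc a b, sin (k * t + θ) ≠ 0 := fun t ht => by
    have h₀ : k * t + θ = k * (t - a) + (π - k * (b - a)) / 2 := by rw [hθ]; ring
    have h₁ : 0 ≤ k * (t - a) := mul_nonneg hk (by linarith [ht.1])
    have h₂ : k * (t - a) ≤ k * (b - a) := mul_le_mul_of_nonneg_left (by linarith [ht.2]) hk
    exact (sin_pos_of_pos_of_lt_pi (by linarith) (by linarith)).ne'
  refine mul_integral_sq_le_integral_deriv_sq_of_riccati hab hf hf' hderiv ha hb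
    (w := fun t => k * (cos (k * t + θ) / sin (k * t + θ)))
    (continuousOn_const.mul ((by fun_prop : ContinuousOn _ _).div (by fun_prop) hsin))
    fun t ht => hasDerivAt_mul_cos_div_sin k θ t (hsin t (Ioo_subset_Icc_self ht))

theorem pi_div_sq_mul_integral_sq_le_integral_deriv_sq (hab : a < b)
    (hf : ContinuousOn f (Icc a b)) (hf' : ContinuousOn f' (Icc a b))
    (hderiv : ∀ t ∈ Ioo a b, HasDerivAt f (f' t) t) (ha : f a = 0) (hb : f b = 0) :
    (π / (b - a)) ^ 2 * ∫ t in a..b, f t ^ 2 ≤ ∫ t in a..b, f' t ^ 2 := by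
  have hba : 0 < b - a := sub_pos.2 hab
  have hlim : Tendsto (fun k : ℝ => k ^ 2 * ∫ t in a..b, f t ^ 2) (𝓝[<] (π / (b - a)))
      (𝓝 ((π / (b - a)) ^ 2 * ∫ t in a..b, f t ^ 2)) :=
    (((continuous_pow 2).mul continuous_const).tendsto _).mono_left nhdsWithin_le_nhds
  refine le_of_tendsto hlim ?_
  filter_upwards [Ioo_mem_nhdsLT (div_pos pi_pos hba)] with k hk
  exact sq_mul_integral_sq_le_integral_deriv_sq hab.le hf hf' hderiv ha hb hk.1.le
    ((lt_div_iff₀ hba).1 hk.2)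

end Wirtinger

theorem stmt_9 (L : ℝ) (hL : 0 < L) (f : ℝ → ℝ)
    (hf : ContDiffOn ℝ 1 f (Icc 0 L)) (h0 : f 0 = 0) (hL0 : f L = 0) :
    ∫ t in (0:ℝ)..L, (f t) ^ 2 ≤
      (L ^ 2 / π ^ 2) * ∫ t in (0:ℝ)..L, (derivWithin f (Icc 0 L) t) ^ 2 := by
  have hderiv : ∀ t ∈ Ioo 0 L, HasDerivAt f (derivWithin f (Icc 0 L) t) t := fun t ht =>
    (hf.differentiableOn one_ne_zero t (Ioo_subset_Icc_self ht)).hasDerivWithinAt.hasDerivAt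
      (Icc_mem_nhds ht.1 ht.2)
  have key := pi_div_sq_mul_integral_sq_le_integral_deriv_sq hL hf.continuousOn
    (hf.continuousOn_derivWithin (uniqueDiffOn_Icc hL) le_rfl) hderiv h0 hL0
  rw [sub_zero] at key
  calc ∫ t in (0:ℝ)..L, f t ^ 2
      = L ^ 2 / π ^ 2 * ((π / L) ^ 2 * ∫ t in (0:ℝ)..L, f t ^ 2) := by
        field_simp
    _ ≤ L ^ 2 / π ^ 2 * ∫ t in (0:ℝ)..L, derivWithin f (Icc 0 L) t ^ 2 := by
        gcongr
end

section
/- Let $a, c$ satisfy $0 < c \le a < 1$ and $a + c = 10/9$, and set $f_1(t) = \sin(\pi c)\sin(\pi t)$ for $t \in [0,a]$ and $f_2(t) = f_3(t) = \sin(\pi a)\sin(\pi t)$ for $t \in [0,c]$. Then $f_1(a) = f_2(c) = f_3(c)$, $f_1(0) = f_2(0) = f_3(0) = 0$, and $\sum_{i} \int f_i'(t)^2\,dt \le \pi^2 \sum_i \int f_i(t)^2\,dt$, where the integrals are over the respective domains. -/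
/-!
For `f t = K * sin (ω * t)` one has `f'' = -ω² f`, so integrating by parts on `[0, L]` gives
`∫ f'² - ω² ∫ f² = f L * f' L`. With `ω = π` the three edges of the star contribute the boundary
term `π sin(πa) sin(πc) (sin(πc) cos(πa) + 2 sin(πa) cos(πc))`. The sines are positive since
`0 < a, c < 1`, and the bracket equals `(3 sin(π(a+c)) + sin(π(a-c))) / 2`,
which is at most `(1 - 3 sin(π/9)) / 2 < 0` when `a + c = 10/9`.
-/

open Real intervalIntegral

lemma hasDerivAt_const_mul_sin_mul (K ω t : ℝ) :
    HasDerivAt (fun s => K * sin (ω * s)) (K * ω * cos (ω * t)) t := by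
  have h := (hasDerivAt_id t).const_mul ω
  simp only [id, mul_one] at h
  exact (h.sin.const_mul K).congr_deriv (by ring)

lemma hasDerivAt_sin_mul_mul_cos_mul (ω t : ℝ) :
    HasDerivAt (fun s => sin (ω * s) * cos (ω * s))
      (ω * (cos (ω * t) ^ 2 - sin (ω * t) ^ 2)) t := by
  have h := (hasDerivAt_id t).const_mul ω
  simp only [id, mul_one] at h
  exact (h.sin.mul h.cos).congr_deriv (by ring)

theorem integral_deriv_sq_sub_integral_sq_const_mul_sin (K ω L : ℝ) :
    (∫ t in (0:ℝ)..L, deriv (fun s => K * sin (ω * s)) t ^ 2)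
        - ω ^ 2 * ∫ t in (0:ℝ)..L, (K * sin (ω * t)) ^ 2
      = K * sin (ω * L) * (K * ω * cos (ω * L)) := by
  have hF (t : ℝ) : HasDerivAt (fun s => K ^ 2 * ω * (sin (ω * s) * cos (ω * s)))
      ((K * ω * cos (ω * t)) ^ 2 - ω ^ 2 * (K * sin (ω * t)) ^ 2) t :=
    ((hasDerivAt_sin_mul_mul_cos_mul ω t).const_mul _).congr_deriv (by ring)
  simp only [fun t => (hasDerivAt_const_mul_sin_mul K ω t).deriv]
  rw [← intervalIntegral.integral_const_mul,
    ← intervalIntegral.integral_sub (Continuous.intervalIntegrable (by fun_prop) _ _)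
      (Continuous.intervalIntegrable (by fun_prop) _ _),
    integral_eq_sub_of_hasDerivAt (fun t _ => hF t)
      (Continuous.intervalIntegrable (by fun_prop) _ _)]
  simp only [mul_zero, sin_zero, zero_mul, sub_zero]
  ring

lemma one_lt_three_mul_sin_pi_div_nine : 1 < 3 * sin (π / 9) := by
  have hcube := sin_gt_sub_cube (x := π / 9) (by positivity)
  have hlt : π / 9 < 0.35 := by linarith [pi_lt_d2]
  have hcube_le : (π / 9) ^ 3 ≤ 0.35 ^ 3 := by gcongr
  linarith [pi_gt_d2]

lemma sin_mul_cos_add_two_mul_sin_mul_cos_neg {x y : ℝ} (h : x + y = π + π / 9) :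
    sin y * cos x + 2 * (sin x * cos y) < 0 := by
  have hsum : sin (x + y) = -sin (π / 9) := by rw [h, sin_add]; simp
  have hdiff := sin_le_one (x - y)
  rw [sin_add] at hsum
  rw [sin_sub] at hdiff
  linarith [one_lt_three_mul_sin_pi_div_nine]

theorem stmt_11 (a c : ℝ) (hc : 0 < c) (hca : c ≤ a) (ha : a < 1)
    (hsum : a + c = 10 / 9) (f₁ f₂ f₃ : ℝ → ℝ)
    (hf₁ : f₁ = fun t => sin (π * c) * sin (π * t))
    (hf₂ : f₂ = fun t => sin (π * a) * sin (π * t))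
    (hf₃ : f₃ = fun t => sin (π * a) * sin (π * t)) :
    f₁ a = f₂ c ∧ f₂ c = f₃ c ∧ f₁ 0 = 0 ∧ f₂ 0 = 0 ∧ f₃ 0 = 0 ∧
      (∫ t in (0:ℝ)..a, (deriv f₁ t) ^ 2) + (∫ t in (0:ℝ)..c, (deriv f₂ t) ^ 2) +
          (∫ t in (0:ℝ)..c, (deriv f₃ t) ^ 2) ≤
        π ^ 2 * ((∫ t in (0:ℝ)..a, (f₁ t) ^ 2) + (∫ t in (0:ℝ)..c, (f₂ t) ^ 2) +
          (∫ t in (0:ℝ)..c, (f₃ t) ^ 2)) := by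
  subst hf₁ hf₂ hf₃
  refine ⟨mul_comm _ _, rfl, by simp, by simp, by simp, ?_⟩
  have hedge₁ := integral_deriv_sq_sub_integral_sq_const_mul_sin (sin (π * c)) π a
  have hedge₂ := integral_deriv_sq_sub_integral_sq_const_mul_sin (sin (π * a)) π c
  have hsin_a : 0 < sin (π * a) :=
    sin_pos_of_pos_of_lt_pi (by nlinarith [pi_pos]) (by nlinarith [pi_pos])
  have hsin_c : 0 < sin (π * c) :=
    sin_pos_of_pos_of_lt_pi (by nlinarith [pi_pos]) (by nlinarith [pi_pos])
  have hbracket := sin_mul_cos_add_two_mul_sin_mul_cos_neg (x := π * a) (y := π * c)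
    (by rw [← mul_add, hsum]; ring)
  have hboundary : π * (sin (π * a) * sin (π * c)) *
      (sin (π * c) * cos (π * a) + 2 * (sin (π * a) * cos (π * c))) ≤ 0 :=
    mul_nonpos_of_nonneg_of_nonpos (by positivity) hbracket.le
  linear_combination hedge₁ + 2 * hedge₂ + hboundary
end
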